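/- Under the value-permuting action of Γ ≤ Sym(R)≀Sym(U), let S ∈ Ω_{j−1} be normalized. Then for every X ∈ Ω_j, X e S holds if and only if there exists p in the Aut(U_{j−1})-orbit of u_j such that underline(X) = U_{j−1} ∪ {p} and the restriction of X to U_{j−1} equals S. -/

import Mathlib

/-!
The wreath product `Sym(R) ≀ Sym(U)` is modeled as the type `Wr U R` of pairs
`(perm, vals)` with `perm ∈ Sym(U)` and `vals : U → Sym(R)`, equipped with the
group structure mirroring (as a left action) the paper's right-action
conventions: `(π₁,σ₁)(π₂,σ₂) = (π₁π₂, v ↦ σ₁(v) σ₂(π₁⁻¹ v))`, acting on points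
by `u ↦ π u`, on pairs by `(u,r) ↦ (π u, σ(π u) r)`, and on partial
assignments (modeled as `U → Option R`) by `(g • X)(v) = σ(v)(X(π⁻¹ v))`.
-/

namespace ValueSymmetry

/-- An element of the wreath product `Sym(R) ≀ Sym(U)`. -/
@[ext]
structure Wr (U R : Type*) where
  perm : Equiv.Perm U
  vals : U → Equiv.Perm R

namespace Wr

variable {U R : Type*}

instance : Mul (Wr U R) :=
  ⟨fun g h => ⟨g.perm * h.perm, fun v => g.vals v * h.vals (g.perm⁻¹ v)⟩⟩

instance : One (Wr U R) := ⟨⟨1, fun _ => 1⟩⟩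

instance : Inv (Wr U R) := ⟨fun g => ⟨g.perm⁻¹, fun v => (g.vals (g.perm v))⁻¹⟩⟩

@[simp] lemma mul_perm (g h : Wr U R) : (g * h).perm = g.perm * h.perm := rfl
@[simp] lemma mul_vals (g h : Wr U R) (v : U) :
    (g * h).vals v = g.vals v * h.vals (g.perm⁻¹ v) := rfl
@[simp] lemma one_perm : (1 : Wr U R).perm = 1 := rfl
@[simp] lemma one_vals (v : U) : (1 : Wr U R).vals v = 1 := rfl
@[simp] lemma inv_perm (g : Wr U R) : (g⁻¹).perm = g.perm⁻¹ := rfl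
@[simp] lemma inv_vals (g : Wr U R) (v : U) :
    (g⁻¹).vals v = (g.vals (g.perm v))⁻¹ := rfl

instance : Group (Wr U R) where
  mul_assoc a b c := by
    ext
    · simp [mul_assoc]
    · simp [mul_assoc]
  one_mul a := by
    ext <;> simp
  mul_one a := by
    ext <;> simp
  inv_mul_cancel a := by
    ext <;> simp

end Wr

variable {U R : Type*}

/-- The action of a wreath-product element on a point of `U`. -/
def wpt (g : Wr U R) (p : U) : U := g.perm p

/-- The action of a wreath-product element on a pair `(u, r) ∈ U × R`
(left-action form of the paper's `(u,r)^{(π,σ)} = (u^π, r^{σ(u^π)})`). -/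
def wpair (g : Wr U R) (pr : U × R) : U × R :=
  (g.perm pr.1, g.vals (g.perm pr.1) pr.2)

/-- The domain `underline X` of a partial assignment. -/
def dom (X : U → Option R) : Set U := {u | X u ≠ none}

/-- The value-permuting action of a wreath-product element on a partial
assignment (left-action form of the paper's `X^{(π,σ)}(u) = X(u^{π⁻¹})^{σ(u)}`). -/
def wsmul (g : Wr U R) (X : U → Option R) : U → Option R :=
  fun v => (X (g.perm⁻¹ v)).map (g.vals v)

open scoped Classical in
/-- Restriction of a partial assignment to a set `W` of variables. -/
noncomputable def restrict (X : U → Option R) (W : Set U) : U → Option R :=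
  fun u => if u ∈ W then X u else none

/-- `Uset u j = U_j = {u_1, …, u_j}` (`u` is 0-indexed). -/
def Uset {k : ℕ} (u : Fin k → U) (j : ℕ) : Set U :=
  {x | ∃ i : Fin k, (i : ℕ) < j ∧ u i = x}

/-- `Ω_j`: partial assignments whose domain lies in the `Γ`-orbit of `U_j`. -/
def OmegaJ (Γ : Subgroup (Wr U R)) {k : ℕ} (u : Fin k → U) (j : ℕ)
    (X : U → Option R) : Prop :=
  ∃ g ∈ Γ, ⇑g.perm '' dom X = Uset u j

/-- The extension relation `e ⊆ Ω_j × Ω_{j-1}` for the value-permuting action. -/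
def erel (Γ : Subgroup (Wr U R)) {k : ℕ} (u : Fin k → U) (j : ℕ)
    (X S : U → Option R) : Prop :=
  ∃ g ∈ Γ, ⇑g.perm '' dom X = Uset u j ∧ ⇑g.perm '' dom S = Uset u (j - 1) ∧
    restrict (wsmul g X) (Uset u (j - 1)) = wsmul g S

/-- The setwise stabilizer `Aut(W)` of `W ⊆ U` in `Γ`. -/
def AutSet (Γ : Subgroup (Wr U R)) (W : Set U) : Set (Wr U R) :=
  {g | g ∈ Γ ∧ ⇑g.perm '' W = W}

/-- The automorphism group (stabilizer) `Aut(S)` of a partial assignment `S` in `Γ`. -/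
def AutAsg (Γ : Subgroup (Wr U R)) (S : U → Option R) : Set (Wr U R) :=
  {g | g ∈ Γ ∧ wsmul g S = S}

/-- The orbit of a point `p ∈ U` under a set `A` of wreath-product elements. -/
def ptOrbit (A : Set (Wr U R)) (p : U) : Set U :=
  {q | ∃ g ∈ A, g.perm p = q}

/-!
An element `g ∈ Γ` witnessing `X e S` maps `underline S = U_{j-1}` onto itself, so it lies in
`Aut(U_{j-1})`, and so does `g⁻¹`. Pulling the defining conditions back along `g` turns
`g(underline X) = U_{j-1} ∪ {u_j}` into `underline X = U_{j-1} ∪ {g⁻¹ u_j}`, and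
`(g X)|_{U_{j-1}} = g S` into `X|_{U_{j-1}} = S`, because restriction to a `g`-stable set commutes
with the action of `g`. Conversely an `h ∈ Aut(U_{j-1})` with `h u_j = p` gives the witness `h⁻¹`.
-/

lemma Uset_succ {k : ℕ} (u : Fin k → U) (i : Fin k) :
    Uset u (i + 1) = Uset u i ∪ {u i} := by
  ext x
  constructor
  · rintro ⟨i', hi', rfl⟩
    rcases Nat.lt_succ_iff_lt_or_eq.1 hi' with hlt | heq
    · exact Or.inl ⟨i', hlt, rfl⟩
    · exact Or.inr (by rw [Fin.ext heq]; rfl)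
  · rintro (⟨i', hi', rfl⟩ | rfl)
    · exact ⟨i', by omega, rfl⟩
    · exact ⟨i, by omega, rfl⟩

lemma wsmul_restrict (g : Wr U R) (Y : U → Option R) (W : Set U) :
    wsmul g (restrict Y W) = restrict (wsmul g Y) (⇑g.perm '' W) := by
  funext v
  have hmem : v ∈ ⇑g.perm '' W ↔ g.perm⁻¹ v ∈ W := Set.mem_image_equiv
  by_cases h : g.perm⁻¹ v ∈ W
  · simp only [wsmul, restrict, if_pos h, if_pos (hmem.mpr h)]
  · simp only [wsmul, restrict, if_neg h, if_neg (mt hmem.mp h), Option.map_none]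

lemma wsmul_inv_wsmul (g : Wr U R) (X : U → Option R) :
    wsmul g⁻¹ (wsmul g X) = X := by
  funext v
  simp [wsmul]

lemma wsmul_injective (g : Wr U R) : Function.Injective (wsmul g) :=
  Function.LeftInverse.injective (wsmul_inv_wsmul g)

lemma inv_mem_AutSet {Γ : Subgroup (Wr U R)} {W : Set U} {g : Wr U R}
    (hg : g ∈ AutSet Γ W) : g⁻¹ ∈ AutSet Γ W := by
  refine ⟨inv_mem hg.1, ?_⟩
  conv_lhs => rw [← hg.2]
  rw [Wr.inv_perm, Equiv.Perm.inv_def, Equiv.symm_image_image]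

lemma image_eq_union_singleton_iff {g : Wr U R} {W : Set U} (hg : ⇑g.perm '' W = W)
    (A : Set U) (q : U) :
    ⇑g.perm '' A = W ∪ {q} ↔ A = W ∪ {g.perm⁻¹ q} := by
  conv_lhs => rw [← Equiv.image_symm_image g.perm (W ∪ {q}), Equiv.image_eq_iff_eq]
  rw [Set.image_union, Set.image_singleton, Equiv.Perm.inv_def]
  conv_lhs => rw [← hg, Equiv.symm_image_image]

lemma restrict_wsmul_eq_wsmul_iff {g : Wr U R} {W : Set U} (hg : ⇑g.perm '' W = W)
    (X S : U → Option R) :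
    restrict (wsmul g X) W = wsmul g S ↔ restrict X W = S := by
  conv_lhs => rw [← hg, ← wsmul_restrict]
  exact (wsmul_injective g).eq_iff

/-- Under the value-permuting action, for a normalized seed `S ∈ Ω_{j-1}`:
an `X ∈ Ω_j` extends `S` iff there is a `p` in the `Aut(U_{j-1})`-orbit of
`u_j` with `underline X = U_{j-1} ∪ {p}` and `X` restricted to `U_{j-1}`
equal to `S`. -/
theorem stmt_17 {U R : Type*}
    (Γ : Subgroup (Wr U R)) {k : ℕ} (u : Fin k → U)
    (j : ℕ) (hj1 : 1 ≤ j) (hjk : j ≤ k)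
    (S : U → Option R)
    (hSnorm : dom S = Uset u (j - 1)) :
    ∀ X : U → Option R, OmegaJ Γ u j X →
      (erel Γ u j X S ↔
        ∃ p ∈ ptOrbit (AutSet Γ (Uset u (j - 1))) (u ⟨j - 1, by omega⟩),
          dom X = Uset u (j - 1) ∪ {p} ∧ restrict X (Uset u (j - 1)) = S) := by
  intro X _
  have hsplit : Uset u j = Uset u (j - 1) ∪ {u ⟨j - 1, by omega⟩} := by
    simpa [Nat.sub_add_cancel hj1] using Uset_succ u ⟨j - 1, by omega⟩
  constructor
  · rintro ⟨g, hgΓ, hXdom, hSdom, hres⟩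
    rw [hSnorm] at hSdom
    refine ⟨g.perm⁻¹ (u ⟨j - 1, by omega⟩), ⟨g⁻¹, inv_mem_AutSet ⟨hgΓ, hSdom⟩, rfl⟩, ?_,
      (restrict_wsmul_eq_wsmul_iff hSdom X S).1 hres⟩
    rwa [hsplit, image_eq_union_singleton_iff hSdom] at hXdom
  · rintro ⟨p, ⟨h, hh, rfl⟩, hdom, hres⟩
    obtain ⟨hΓ, hU⟩ := inv_mem_AutSet hh
    refine ⟨h⁻¹, hΓ, ?_, hSnorm ▸ hU, (restrict_wsmul_eq_wsmul_iff hU X S).2 hres⟩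
    rw [hsplit, image_eq_union_singleton_iff hU]
    simpa using hdom

end ValueSymmetry
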